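/- If two metrizable coarse spaces (X, E) and (X, E') on the same set X are λ-equivalent, then E = E'. (The class of metrizable coarse spaces is λ-rigid.) -/
import Mathlib


open Set

/-- A coarse structure (ballean) on a set `X`. -/
structure CoarseStruct (X : Type*) where
  sets : Set (Set (X × X))
  diagonal_mem : Set.diagonal X ∈ sets
  diagonal_subset : ∀ E ∈ sets, Set.diagonal X ⊆ E
  comp_mem : ∀ E ∈ sets, ∀ F ∈ sets,
    {p : X × X | ∃ z, (p.1, z) ∈ E ∧ (z, p.2) ∈ F} ∈ sets
  inv_mem : ∀ E ∈ sets, {p : X × X | (p.2, p.1) ∈ E} ∈ sets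
  subset_mem : ∀ E ∈ sets, ∀ E' : Set (X × X),
    Set.diagonal X ⊆ E' → E' ⊆ E → E' ∈ sets
  cover : ∀ p : X × X, ∃ E ∈ sets, p ∈ E

namespace CoarseStruct

variable {X : Type*}

/-- The ball `E[A]` of radius `E` around `A`. -/
def ball (E : Set (X × X)) (A : Set X) : Set X := {y | ∃ a ∈ A, (a, y) ∈ E}

/-- A set is bounded if it is contained in a ball around a point. -/
def IsBounded (C : CoarseStruct X) (B : Set X) : Prop :=
  ∃ E ∈ C.sets, ∃ x : X, B ⊆ ball E {x}

/-- Closeness: `A δ B`. -/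
def Close (C : CoarseStruct X) (A B : Set X) : Prop :=
  ∃ E ∈ C.sets, A ⊆ ball E B ∧ B ⊆ ball E A

/-- Linkness: `A λ B`. -/
def Linked (C : CoarseStruct X) (A B : Set X) : Prop :=
  (C.IsBounded A ∧ C.IsBounded B) ∨
  ∃ A' B' : Set X, A' ⊆ A ∧ B' ⊆ B ∧ ¬C.IsBounded A' ∧ ¬C.IsBounded B' ∧ C.Close A' B'

def LambdaEquiv (C C' : CoarseStruct X) : Prop :=
  ∀ A B : Set X, C.Linked A B ↔ C'.Linked A B

def DeltaEquiv (C C' : CoarseStruct X) : Prop :=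
  ∀ A B : Set X, C.Close A B ↔ C'.Close A B

def Discrete (C : CoarseStruct X) : Prop :=
  ∀ E ∈ C.sets, ∃ B : Set X, C.IsBounded B ∧ ∀ x ∉ B, ball E {x} = {x}

def Large (C : CoarseStruct X) (Y : Set X) : Prop :=
  ∃ E ∈ C.sets, ball E Y = Set.univ

/-- The subballean on `Y` is discrete. -/
def DiscreteOn (C : CoarseStruct X) (Y : Set X) : Prop :=
  ∀ E ∈ C.sets, ∃ B : Set X, C.IsBounded B ∧ ∀ y ∈ Y \ B, ball E {y} ∩ Y = {y}

def CoarselyDiscrete (C : CoarseStruct X) : Prop :=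
  ∃ Y : Set X, C.Large Y ∧ C.DiscreteOn Y

def LambdaRigid (C : CoarseStruct X) : Prop :=
  ∀ C' : CoarseStruct X, LambdaEquiv C C' → C' = C

def DeltaRigid (C : CoarseStruct X) : Prop :=
  ∀ C' : CoarseStruct X, DeltaEquiv C C' → C' = C

def IsBase (C : CoarseStruct X) (B : Set (Set (X × X))) : Prop :=
  B ⊆ C.sets ∧ ∀ E ∈ C.sets, ∃ E' ∈ B, E ⊆ E'

/-- Metrizable: the coarse structure has a countable base. -/
def Metrizable (C : CoarseStruct X) : Prop :=
  ∃ B : Set (Set (X × X)), B.Countable ∧ C.IsBase B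

/-- Ordinal: the coarse structure has a base linearly ordered by inclusion. -/
def Ordinal (C : CoarseStruct X) : Prop :=
  ∃ B : Set (Set (X × X)), C.IsBase B ∧ IsChain (· ⊆ ·) B

def MacroUniform (C : CoarseStruct X) (f : X → ℝ) : Prop :=
  ∀ E ∈ C.sets, ∃ r : ℝ, 0 < r ∧
    ∀ x : X, ∀ y ∈ ball E {x}, ∀ z ∈ ball E {x}, |f y - f z| ≤ r

def Submetrizable (C : CoarseStruct X) : Prop :=
  ¬C.IsBounded Set.univ ∧ ∃ C'' : CoarseStruct X,
    C.sets ⊆ C''.sets ∧ ¬C''.IsBounded Set.univ ∧ C''.Metrizable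

def SlowlyOscillating (C : CoarseStruct X) (f : X → ℝ) : Prop :=
  ∀ E ∈ C.sets, ∀ ε : ℝ, 0 < ε → ∃ B : Set X, C.IsBounded B ∧
    ∀ x ∉ B, ∀ y ∈ ball E {x}, ∀ z ∈ ball E {x}, |f y - f z| < ε

/-- The entourage `H_{(E,Φ)}`: `H[x] = {x}` for `x ∈ Φ` and `H[x] = E[x] \ Φ` for `x ∉ Φ`. -/
def EPhiBase (E : Set (X × X)) (Φ : Set X) : Set (X × X) :=
  {p | (p.1 ∈ Φ ∧ p.1 = p.2) ∨ (p.1 ∉ Φ ∧ p.2 ∉ Φ ∧ (p.1, p.2) ∈ E)}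

/-- The family of entourages of the coarse structure `E_φ` with base `{H_{(E,Φ)}}`. -/
def EPhiSets (C : CoarseStruct X) (φ : Filter X) : Set (Set (X × X)) :=
  {E' | Set.diagonal X ⊆ E' ∧ ∃ E ∈ C.sets, ∃ Φ ∈ φ, E' ⊆ EPhiBase E Φ}

/-- The set `B♯` of ultrafilters containing the complement of every bounded set. -/
def Bsharp (C : CoarseStruct X) : Set (Ultrafilter X) :=
  {p | ∀ B : Set X, C.IsBounded B → Bᶜ ∈ p}

/-- Parallelity of ultrafilters: `p ∥ q`. -/
def Parallel (C : CoarseStruct X) (p q : Ultrafilter X) : Prop :=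
  ∃ E ∈ C.sets, ∀ P ∈ p, ball E P ∈ q

def AsympDisjoint (C : CoarseStruct X) (A B : Set X) : Prop :=
  ∀ E ∈ C.sets, C.IsBounded (ball E A ∩ ball E B)

def AsympNbhd (C : CoarseStruct X) (A U : Set X) : Prop :=
  ∀ E ∈ C.sets, C.IsBounded (ball E A \ U)

def Normal (C : CoarseStruct X) : Prop :=
  ∀ A B : Set X, C.AsympDisjoint A B →
    ∃ U V : Set X, C.AsympNbhd A U ∧ C.AsympNbhd B V ∧ Disjoint U V

end CoarseStruct

namespace CoarseStruct
variable {X : Type*}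

/-- Composition of relations. -/
def compS (E F : Set (X × X)) : Set (X × X) := {p : X × X | ∃ z, (p.1, z) ∈ E ∧ (z, p.2) ∈ F}

/-- Inverse of a relation. -/
def invS (E : Set (X × X)) : Set (X × X) := {p : X × X | (p.2, p.1) ∈ E}

lemma union_mem (C : CoarseStruct X) {E F : Set (X × X)} (hE : E ∈ C.sets) (hF : F ∈ C.sets) :
    E ∪ F ∈ C.sets := by
  have hc := C.comp_mem E hE F hF
  refine C.subset_mem _ hc (E ∪ F) ?_ ?_
  · intro p hp
    exact Or.inl (C.diagonal_subset E hE hp)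
  · rintro ⟨x, y⟩ (hp | hp)
    · exact ⟨y, hp, C.diagonal_subset F hF rfl⟩
    · exact ⟨x, C.diagonal_subset E hE rfl, hp⟩

lemma invS_mem (C : CoarseStruct X) {E : Set (X × X)} (hE : E ∈ C.sets) : invS E ∈ C.sets :=
  C.inv_mem E hE

lemma compS_mem (C : CoarseStruct X) {E F : Set (X × X)} (hE : E ∈ C.sets) (hF : F ∈ C.sets) :
    compS E F ∈ C.sets := C.comp_mem E hE F hF

lemma bounded_mono (C : CoarseStruct X) {A B : Set X} (hAB : A ⊆ B) (hB : C.IsBounded B) :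
    C.IsBounded A := by
  obtain ⟨E, hE, x, hx⟩ := hB
  exact ⟨E, hE, x, hAB.trans hx⟩

lemma bounded_empty (C : CoarseStruct X) [Nonempty X] : C.IsBounded ∅ :=
  ⟨Set.diagonal X, C.diagonal_mem, Classical.arbitrary X, by simp⟩

lemma bounded_ball_singleton (C : CoarseStruct X) {E : Set (X × X)} (hE : E ∈ C.sets) (x : X) :
    C.IsBounded (ball E {x}) := ⟨E, hE, x, subset_rfl⟩

lemma bounded_singleton (C : CoarseStruct X) (x : X) : C.IsBounded {x} :=
  ⟨Set.diagonal X, C.diagonal_mem, x, fun y hy => ⟨x, rfl, (Set.mem_singleton_iff.mp hy).symm⟩⟩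

lemma bounded_union (C : CoarseStruct X) {A B : Set X} (hA : C.IsBounded A) (hB : C.IsBounded B) :
    C.IsBounded (A ∪ B) := by
  obtain ⟨Ea, hEa, xa, hxa⟩ := hA
  obtain ⟨Eb, hEb, xb, hxb⟩ := hB
  obtain ⟨E0, hE0, hp⟩ := C.cover (xa, xb)
  refine ⟨Ea ∪ compS E0 Eb, C.union_mem hEa (C.compS_mem hE0 hEb), xa, ?_⟩
  rintro z (hz | hz)
  · obtain ⟨a, ha1, ha2⟩ := hxa hz
    rw [Set.mem_singleton_iff] at ha1
    rw [ha1] at ha2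
    exact ⟨xa, rfl, Or.inl ha2⟩
  · obtain ⟨b, hb1, hb2⟩ := hxb hz
    rw [Set.mem_singleton_iff] at hb1
    rw [hb1] at hb2
    exact ⟨xa, rfl, Or.inr ⟨xb, hp, hb2⟩⟩

lemma bounded_biUnion (C : CoarseStruct X) [Nonempty X] {n : ℕ} {f : ℕ → Set X}
    (hf : ∀ i < n, C.IsBounded (f i)) :
    C.IsBounded (⋃ i ∈ Finset.range n, f i) := by
  induction n with
  | zero => simpa using C.bounded_empty
  | succ n ih =>
    rw [Finset.range_add_one, Finset.set_biUnion_insert]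
    exact C.bounded_union (hf n (Nat.lt_succ_self n))
      (ih fun i hi => hf i (hi.trans (Nat.lt_succ_self n)))

lemma linked_empty (C : CoarseStruct X) [Nonempty X] (A : Set X) :
    C.Linked A ∅ ↔ C.IsBounded A := by
  constructor
  · rintro (⟨hA, _⟩ | ⟨A', B', _, hB', _, hB'ub, _⟩)
    · exact hA
    · exact absurd (C.bounded_mono hB' C.bounded_empty) hB'ub
  · intro hA
    exact Or.inl ⟨hA, C.bounded_empty⟩

lemma bounded_transfer {C C' : CoarseStruct X} [Nonempty X] (h : LambdaEquiv C C') (A : Set X) :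
    C.IsBounded A ↔ C'.IsBounded A := by
  rw [← C.linked_empty A, ← C'.linked_empty A]
  exact h A ∅

lemma prod_mem (C : CoarseStruct X) {B : Set X} (hB : C.IsBounded B) :
    {p : X × X | p.1 ∈ B ∧ p.2 ∈ B} ∪ Set.diagonal X ∈ C.sets := by
  obtain ⟨F, hF, x, hx⟩ := hB
  have hmem : compS (invS F) F ∪ Set.diagonal X ∈ C.sets :=
    C.union_mem (C.compS_mem (C.invS_mem hF) hF) C.diagonal_mem
  refine C.subset_mem _ hmem _ (fun p hp => Or.inr hp) ?_
  rintro ⟨a, b⟩ (⟨ha, hb⟩ | hd)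
  · obtain ⟨a', ha1, ha2⟩ := hx ha
    obtain ⟨b', hb1, hb2⟩ := hx hb
    rw [Set.mem_singleton_iff] at ha1 hb1
    rw [ha1] at ha2; rw [hb1] at hb2
    exact Or.inl ⟨x, ha2, hb2⟩
  · exact Or.inr hd

end CoarseStruct
namespace CoarseStruct
variable {X : Type*}

/-- A nice increasing symmetric base sequence for a metrizable coarse structure. -/
lemma exists_base_seq (C : CoarseStruct X) (hm : C.Metrizable) :
    ∃ D : ℕ → Set (X × X),
      (∀ n, D n ∈ C.sets) ∧
      (∀ n p, p ∈ D n → ((p : X × X).2, p.1) ∈ D n) ∧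
      (∀ m n, m ≤ n → D m ⊆ D n) ∧
      (∀ n, compS (D n) (D n) ⊆ D (n + 1)) ∧
      (∀ G ∈ C.sets, ∃ n, G ⊆ D n) := by
  obtain ⟨B, hBc, hBsub, hBbase⟩ := hm
  have hBne : B.Nonempty := by
    obtain ⟨E', hE', _⟩ := hBbase _ C.diagonal_mem
    exact ⟨E', hE'⟩
  obtain ⟨e, rfl⟩ := hBc.exists_eq_range hBne
  have he : ∀ n, e n ∈ C.sets := fun n => hBsub ⟨n, rfl⟩
  set D : ℕ → Set (X × X) :=
    fun n => Nat.rec (e 0 ∪ invS (e 0))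
      (fun n Dn => compS Dn Dn ∪ (e (n + 1) ∪ invS (e (n + 1)))) n with hD
  have hmem : ∀ n, D n ∈ C.sets := by
    intro n
    induction n with
    | zero => exact C.union_mem (he 0) (C.invS_mem (he 0))
    | succ n ih =>
      exact C.union_mem (C.compS_mem ih ih) (C.union_mem (he (n+1)) (C.invS_mem (he (n+1))))
  have hsym : ∀ n p, p ∈ D n → ((p : X × X).2, p.1) ∈ D n := by
    intro n
    induction n with
    | zero =>
      rintro ⟨a, b⟩ (hp | hp)
      · exact Or.inr hp
      · exact Or.inl hp
    | succ n ih =>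
      rintro ⟨a, b⟩ (⟨z, h1, h2⟩ | (hp | hp))
      · exact Or.inl ⟨z, ih _ h2, ih _ h1⟩
      · exact Or.inr (Or.inr hp)
      · exact Or.inr (Or.inl hp)
  have hsucc : ∀ n, D n ⊆ D (n + 1) := by
    intro n p hp
    exact Or.inl ⟨p.2, hp, C.diagonal_subset _ (hmem n) rfl⟩
  have hmono : ∀ m n, m ≤ n → D m ⊆ D n := by
    intro m n hmn
    induction hmn with
    | refl => exact subset_rfl
    | step h ih => exact ih.trans (hsucc _)
  have hcomp : ∀ n, compS (D n) (D n) ⊆ D (n + 1) := fun n => Set.subset_union_left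
  have hen : ∀ n, e n ⊆ D n := by
    intro n
    cases n with
    | zero => exact Set.subset_union_left
    | succ n => exact Set.subset_union_left.trans Set.subset_union_right
  refine ⟨D, hmem, hsym, hmono, hcomp, ?_⟩
  intro G hG
  obtain ⟨E', ⟨n, rfl⟩, hGE⟩ := hBbase G hG
  exact ⟨n, hGE.trans (hen n)⟩
end CoarseStruct

noncomputable def depSeq {α : Type*} [Nonempty α] (g : ℕ → (ℕ → α) → α) : ℕ → α
  | k => g k (fun i => if _ : i < k then depSeq g i else Classical.arbitrary α)
termination_by k => k

theorem depSeq_eq {α : Type*} [Nonempty α] (g : ℕ → (ℕ → α) → α) (k : ℕ) :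
    depSeq g k = g k (fun i => if _ : i < k then depSeq g i else Classical.arbitrary α) := by
  rw [depSeq]

namespace CoarseStruct
variable {X : Type*}

/-- Escape lemma: if `E ∈ C.sets` is symmetric but not in `C'.sets`, then for each
entourage `F` of `C'` and each `C`-bounded set `B` there is a pair in `E \ F` avoiding `B`. -/
lemma escape {C C' : CoarseStruct X}
    (htrans : ∀ A : Set X, C.IsBounded A ↔ C'.IsBounded A)
    {E : Set (X × X)} (hE : E ∈ C.sets) (hEsym : ∀ p ∈ E, ((p : X × X).2, p.1) ∈ E)
    (hEnot : E ∉ C'.sets) {F : Set (X × X)} (hF : F ∈ C'.sets) {B : Set X}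
    (hB : C.IsBounded B) :
    ∃ p ∈ E, p ∉ F ∧ (p : X × X).1 ∉ B ∧ p.2 ∉ B := by
  by_contra hcon
  push_neg at hcon
  -- the thickened bounded set
  set Bh : Set X := B ∪ ball E B with hBh
  have hBhb : C.IsBounded Bh := by
    obtain ⟨D, hD, x, hx⟩ := hB
    refine ⟨D ∪ compS D E, C.union_mem hD (C.compS_mem hD hE), x, ?_⟩
    rintro z (hz | ⟨b, hb, hbz⟩)
    · obtain ⟨a, ha1, ha2⟩ := hx hz
      exact ⟨a, ha1, Or.inl ha2⟩
    · obtain ⟨a, ha1, ha2⟩ := hx hb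
      exact ⟨a, ha1, Or.inr ⟨b, ha2, hbz⟩⟩
  have hprod : {p : X × X | p.1 ∈ Bh ∧ p.2 ∈ Bh} ∪ Set.diagonal X ∈ C'.sets :=
    C'.prod_mem ((htrans Bh).mp hBhb)
  have hbig : F ∪ ({p : X × X | p.1 ∈ Bh ∧ p.2 ∈ Bh} ∪ Set.diagonal X) ∈ C'.sets :=
    C'.union_mem hF hprod
  refine hEnot (C'.subset_mem _ hbig E (C.diagonal_subset E hE) ?_)
  rintro ⟨a, b⟩ hab
  rcases Classical.em ((a, b) ∈ F) with hf | hf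
  · exact Or.inl hf
  · rcases Classical.em (a ∈ B) with ha | ha
    · exact Or.inr (Or.inl ⟨Or.inl ha, Or.inr ⟨a, ha, hab⟩⟩)
    · have hb : b ∈ B := hcon (a, b) hab hf ha
      exact Or.inr (Or.inl ⟨Or.inr ⟨b, hb, hEsym _ hab⟩, Or.inl hb⟩)
end CoarseStruct

namespace CoarseStruct
variable {X : Type*}

lemma sets_subset (C C' : CoarseStruct X) [Nonempty X]
    (hC : C.Metrizable) (hC' : C'.Metrizable) (h : LambdaEquiv C C') :
    C.sets ⊆ C'.sets := by
  intro E0 hE0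
  by_contra hnot
  have htrans : ∀ A : Set X, C.IsBounded A ↔ C'.IsBounded A := bounded_transfer h
  -- symmetrize
  set E : Set (X × X) := E0 ∪ invS E0 with hEdef
  have hE : E ∈ C.sets := C.union_mem hE0 (C.invS_mem hE0)
  have hEsym : ∀ p ∈ E, ((p : X × X).2, p.1) ∈ E := by
    rintro ⟨a, b⟩ (hp | hp)
    · exact Or.inr hp
    · exact Or.inl hp
  have hEnot : E ∉ C'.sets := fun hmem =>
    hnot (C'.subset_mem _ hmem E0 (C.diagonal_subset _ hE0) Set.subset_union_left)
  obtain ⟨D, hDmem, hDsym, hDmono, hDcomp, hDbase⟩ := C.exists_base_seq hC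
  obtain ⟨Fs, hFmem, hFsym, hFmono, hFcomp, hFbase⟩ := C'.exists_base_seq hC'
  -- forbidden bounded sets
  set S : ℕ → (ℕ → X × X) → Set X := fun k prev =>
    ⋃ i ∈ Finset.range k,
      (ball (D k) {(prev i).1} ∪ ball (D k) {(prev i).2} ∪
       ball (Fs k) {(prev i).1} ∪ ball (Fs k) {(prev i).2}) with hSdef
  have hSb : ∀ k prev, C.IsBounded (S k prev) := by
    intro k prev
    apply C.bounded_biUnion
    intro i _
    refine C.bounded_union (C.bounded_union (C.bounded_union ?_ ?_) ?_) ?_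
    · exact C.bounded_ball_singleton (hDmem k) _
    · exact C.bounded_ball_singleton (hDmem k) _
    · exact (htrans _).mpr (C'.bounded_ball_singleton (hFmem k) _)
    · exact (htrans _).mpr (C'.bounded_ball_singleton (hFmem k) _)
  have hex : ∀ k (prev : ℕ → X × X),
      ∃ p ∈ E, p ∉ Fs k ∧ (p : X × X).1 ∉ S k prev ∧ p.2 ∉ S k prev :=
    fun k prev => escape htrans hE hEsym hEnot (hFmem k) (hSb k prev)
  set g : ℕ → (ℕ → X × X) → X × X := fun k prev => Classical.choose (hex k prev) with hgdef
  set seq : ℕ → X × X := depSeq g with hseqdef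
  set x : ℕ → X := fun k => (seq k).1 with hxdef
  set y : ℕ → X := fun k => (seq k).2 with hydef
  have hspec : ∀ k, seq k ∈ E ∧ seq k ∉ Fs k ∧
      (∀ i < k, x k ∉ ball (D k) {x i} ∧ x k ∉ ball (D k) {y i} ∧
                x k ∉ ball (Fs k) {x i} ∧ x k ∉ ball (Fs k) {y i}) ∧
      (∀ i < k, y k ∉ ball (D k) {x i} ∧ y k ∉ ball (D k) {y i} ∧
                y k ∉ ball (Fs k) {x i} ∧ y k ∉ ball (Fs k) {y i}) := by
    intro k
    set prev : ℕ → X × X :=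
      fun i => if _ : i < k then depSeq g i else Classical.arbitrary _ with hprevdef
    have hk : seq k = g k prev := depSeq_eq g k
    have hk2 : seq k = Classical.choose (hex k prev) := hk
    have hcs := Classical.choose_spec (hex k prev)
    rw [← hk2] at hcs
    obtain ⟨h1, h2, h3, h4⟩ := hcs
    have hnotS : ∀ z, z ∉ S k prev → ∀ i < k,
        z ∉ ball (D k) {x i} ∧ z ∉ ball (D k) {y i} ∧
        z ∉ ball (Fs k) {x i} ∧ z ∉ ball (Fs k) {y i} := by
      intro z hz i hik
      have hpi : prev i = seq i := by simp [hprevdef, hik, hseqdef]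
      have hnm : z ∉ (ball (D k) {(prev i).1} ∪ ball (D k) {(prev i).2} ∪
          ball (Fs k) {(prev i).1} ∪ ball (Fs k) {(prev i).2}) :=
        fun hmem => hz (Set.mem_biUnion (Finset.mem_range.mpr hik) hmem)
      rw [hpi] at hnm
      simp only [Set.mem_union, not_or] at hnm
      exact ⟨hnm.1.1.1, hnm.1.1.2, hnm.1.2, hnm.2⟩
    exact ⟨h1, h2, hnotS _ h3, hnotS _ h4⟩
  have hmemE : ∀ k, (x k, y k) ∈ E := fun k => (hspec k).1
  -- unboundedness of ranges
  have hAub : ¬ C.IsBounded (Set.range x) := by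
    rintro ⟨G, hG, z, hz⟩
    obtain ⟨m, hGm⟩ := hDbase G hG
    have hball : ∀ k, (z, x k) ∈ D m := by
      intro k
      obtain ⟨a, ha, hza⟩ := hz ⟨k, rfl⟩
      rw [Set.mem_singleton_iff] at ha
      rw [ha] at hza
      exact hGm hza
    have hcomp2 : (x 0, x (m + 1)) ∈ D (m + 1) :=
      hDcomp m ⟨z, hDsym m _ (hball 0), hball (m + 1)⟩
    exact ((hspec (m + 1)).2.2.1 0 (Nat.succ_pos m)).1 ⟨x 0, rfl, hcomp2⟩
  have hBub : ¬ C.IsBounded (Set.range y) := by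
    rintro ⟨G, hG, z, hz⟩
    obtain ⟨m, hGm⟩ := hDbase G hG
    have hball : ∀ k, (z, y k) ∈ D m := by
      intro k
      obtain ⟨a, ha, hza⟩ := hz ⟨k, rfl⟩
      rw [Set.mem_singleton_iff] at ha
      rw [ha] at hza
      exact hGm hza
    have hcomp2 : (y 0, y (m + 1)) ∈ D (m + 1) :=
      hDcomp m ⟨z, hDsym m _ (hball 0), hball (m + 1)⟩
    exact ((hspec (m + 1)).2.2.2 0 (Nat.succ_pos m)).2.1 ⟨y 0, rfl, hcomp2⟩
  -- closeness in C
  have hclose : C.Close (Set.range x) (Set.range y) := by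
    refine ⟨E, hE, ?_, ?_⟩
    · rintro a ⟨k, rfl⟩
      exact ⟨y k, ⟨k, rfl⟩, hEsym _ (hmemE k)⟩
    · rintro b ⟨k, rfl⟩
      exact ⟨x k, ⟨k, rfl⟩, hmemE k⟩
  have hlink : C.Linked (Set.range x) (Set.range y) :=
    Or.inr ⟨Set.range x, Set.range y, subset_rfl, subset_rfl, hAub, hBub, hclose⟩
  rcases (h _ _).mp hlink with ⟨hA', _⟩ | ⟨A', B', hA's, hB's, hA'ub, hB'ub, F, hFm, hsub1, _⟩
  · exact hAub ((htrans _).mpr hA')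
  · obtain ⟨m, hFm2⟩ := hFbase F hFm
    have hA'ubC : ¬ C.IsBounded A' := fun hb => hA'ub ((htrans _).mp hb)
    have hT : C.IsBounded (⋃ i ∈ Finset.range m, ({x i} : Set X)) :=
      C.bounded_biUnion fun i _ => C.bounded_singleton _
    have hns : ¬ A' ⊆ ⋃ i ∈ Finset.range m, ({x i} : Set X) :=
      fun hs => hA'ubC (C.bounded_mono hs hT)
    obtain ⟨a, haA', haT⟩ := Set.not_subset.mp hns
    obtain ⟨j, rfl⟩ := hA's haA'
    have hjm : m ≤ j := by
      by_contra hlt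
      push_neg at hlt
      exact haT (Set.mem_biUnion (Finset.mem_range.mpr hlt) rfl)
    obtain ⟨b, hbB', hbF⟩ := hsub1 haA'
    obtain ⟨i, rfl⟩ := hB's hbB'
    have hFsm : (y i, x j) ∈ Fs m := hFm2 hbF
    rcases lt_trichotomy i j with hij | rfl | hij
    · exact ((hspec j).2.2.1 i hij).2.2.2 ⟨y i, rfl, hFmono m j hjm hFsm⟩
    · exact (hspec i).2.1 (hFmono m i hjm (hFsym m _ hFsm))
    · exact ((hspec i).2.2.2 j hij).2.2.1 ⟨x j, rfl, hFmono m i (hjm.trans hij.le) (hFsym m _ hFsm)⟩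

lemma ext' {C C' : CoarseStruct X} (hs : C.sets = C'.sets) : C = C' := by
  obtain ⟨s, a1, a2, a3, a4, a5, a6⟩ := C
  obtain ⟨s', b1, b2, b3, b4, b5, b6⟩ := C'
  simp only at hs
  subst hs
  rfl
end CoarseStruct

/-- The class of metrizable coarse spaces is λ-rigid. -/
theorem metrizable_lambdaRigid_class {X : Type*} (C C' : CoarseStruct X)
    (hC : C.Metrizable) (hC' : C'.Metrizable)
    (h : CoarseStruct.LambdaEquiv C C') : C = C' := by
  rcases isEmpty_or_nonempty X with hX | hX
  · apply CoarseStruct.ext'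
    ext E
    have hE : E = Set.diagonal X := by
      rw [Set.eq_empty_of_isEmpty E, Set.eq_empty_of_isEmpty (Set.diagonal X)]
    rw [hE]
    exact ⟨fun _ => C'.diagonal_mem, fun _ => C.diagonal_mem⟩
  · exact CoarseStruct.ext' (Set.Subset.antisymm
      (CoarseStruct.sets_subset C C' hC hC' h)
      (CoarseStruct.sets_subset C' C hC' hC fun A B => (h A B).symm))
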